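/- Let M^n be a θ-slant proper submanifold of a quaternionic space form M̄^{4m}(c) and let 0 < r < n(n−1). Then the normalized scalar curvature ρ = 2τ/(n(n−1)) satisfies ρ ≤ δ_C(r; n−1)/(n(n−1)) + (c/4)(1 + (9/(n−1))·cos²θ), where δ_C(r; n−1) = r𝒞 + ((n−1)(n+r)(n²−n−r)/(rn))·inf{𝒞(L) : L a hyperplane of T_pM}. -/

import Mathlib

/-!
At a point, write `τ` through the Gauss equation. For the quaternionic curvature tensor,
`⟪R(x, y) y, x⟫ = (c/4) (‖x‖²‖y‖² - ⟪x, y⟫² + 3 ∑_α ⟪x, J_α y⟫²)`, and summing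
`⟪e_i, J_α e_j⟫²` over `i` gives `‖(J_α e_j)ᵀ‖² = cos² θ` by slantness, so the ambient part
of `2τ` is `(c/4) (n(n-1) + 9 n cos² θ)`; the extrinsic part is `‖H‖² - n 𝒞` with `H = ∑ h(e_i, e_i)`.

For a hyperplane `L`, complete an orthonormal basis `f_1, …, f_{n-1}` of `L` by a unit vector
`f_n` of `W`. Trace and Hilbert–Schmidt norm of `h` do not depend on the orthonormal basis, so
`H = x + h(f_n, f_n)` with `x` the trace over `L`, and Cauchy–Schwarz plus Young's inequality
with weight `n / r` give `‖H‖² ≤ (1 + r/n) n 𝒞 + ((n-1)(n+r)(n²-n-r)/(rn)) 𝒞(L)`.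
-/

open RealInnerProductSpace Finset

/-- Curvature tensor of a quaternionic space form with quaternionic sectional
curvature `c`. -/
noncomputable def qsfCurv {V : Type*} [NormedAddCommGroup V] [InnerProductSpace ℝ V]
    (c : ℝ) (J : Fin 3 → V →ₗ[ℝ] V) (X Y Z : V) : V :=
  (c / 4) • (⟪Z, Y⟫ • X - ⟪X, Z⟫ • Y
    + ∑ α : Fin 3, (⟪Z, J α Y⟫ • J α X - ⟪Z, J α X⟫ • J α Y
        + (2 * ⟪X, J α Y⟫) • J α Z))

/-- The Casorati curvature `𝒞(L)` of an `(n−1)`-dimensional subspace `L` of the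
tangent space, computed in an orthonormal basis of `L`:
`𝒞(L) = (1/(n−1)) ∑_{i,j} ‖h(f_i, f_j)‖²`. -/
noncomputable def hypCas {V : Type*} [NormedAddCommGroup V] [InnerProductSpace ℝ V]
    [FiniteDimensional ℝ V] (n : ℕ) (B : V →ₗ[ℝ] V →ₗ[ℝ] V) (L : Submodule ℝ V) : ℝ :=
  (1 / ((n : ℝ) - 1)) * ∑ i : Fin (Module.finrank ℝ L), ∑ j : Fin (Module.finrank ℝ L),
    ‖B ((stdOrthonormalBasis ℝ L) i : V) ((stdOrthonormalBasis ℝ L) j : V)‖ ^ 2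

open Module

theorem norm_add_sq_le_of_pos {F : Type*} [NormedAddCommGroup F] [InnerProductSpace ℝ F]
    (x y : F) {t : ℝ} (ht : 0 < t) :
    ‖x + y‖ ^ 2 ≤ (1 + t) * ‖x‖ ^ 2 + (1 + t⁻¹) * ‖y‖ ^ 2 := by
  have hyoung : 2 * (‖x‖ * ‖y‖) ≤ t * ‖x‖ ^ 2 + t⁻¹ * ‖y‖ ^ 2 := by
    field_simp
    nlinarith [sq_nonneg (t * ‖x‖ - ‖y‖)]
  nlinarith [norm_add_sq_real x y, real_inner_le_norm x y]

theorem norm_sum_sq_le_card_mul_sum_norm_sq {ι F : Type*} [SeminormedAddCommGroup F]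
    (s : Finset ι) (v : ι → F) : ‖∑ i ∈ s, v i‖ ^ 2 ≤ #s * ∑ i ∈ s, ‖v i‖ ^ 2 :=
  (pow_le_pow_left₀ (norm_nonneg _) (norm_sum_le _ _) 2).trans (sq_sum_le_card_mul_sum_sq ..)

theorem norm_sum_sq_eq_sum_sum_inner {ι F : Type*} [NormedAddCommGroup F]
    [InnerProductSpace ℝ F] (s : Finset ι) (v : ι → F) :
    ‖∑ i ∈ s, v i‖ ^ 2 = ∑ i ∈ s, ∑ j ∈ s, ⟪v i, v j⟫ := by
  rw [← real_inner_self_eq_norm_sq, sum_inner]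
  simp_rw [inner_sum]

theorem sum_diag_le_sum_sum {ι : Type*} [Fintype ι] (g : ι → ι → ℝ) (hg : ∀ i j, 0 ≤ g i j) :
    ∑ i, g i i ≤ ∑ i, ∑ j, g i j :=
  sum_le_sum fun i _ => single_le_sum (fun j _ => hg i j) (mem_univ i)

theorem sum_sum_eq_two_mul_sum_lt_add_sum_diag {ι R : Type*} [Fintype ι] [LinearOrder ι]
    [CommSemiring R] (t : ι → ι → R) (ht : ∀ i j, t i j = t j i) :
    ∑ i, ∑ j, t i j = 2 * ∑ i, ∑ j, (if i < j then t i j else 0) + ∑ i, t i i := by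
  have hsplit : ∀ i j, t i j = (if i < j then t i j else 0) + (if j < i then t j i else 0)
      + (if i = j then t i j else 0) := by
    intro i j
    rcases lt_trichotomy i j with h | rfl | h
    · simp [h, h.ne, h.not_gt]
    · simp
    · simp [h, h.ne', h.not_gt, ht i j]
  have hswap : ∑ i, ∑ j, (if j < i then t j i else 0) = ∑ i, ∑ j, (if i < j then t i j else 0) :=
    sum_comm
  conv_lhs => enter [2, i, 2, j]; rw [hsplit i j]
  simp only [sum_add_distrib, hswap, sum_ite_eq, mem_univ, if_true]
  ring

section OrthonormalBasis

variable {ι ι' E F M : Type*} [Fintype ι] [Fintype ι']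
  [NormedAddCommGroup E] [InnerProductSpace ℝ E] [NormedAddCommGroup F] [InnerProductSpace ℝ F]
  [AddCommGroup M] [Module ℝ M] (b : OrthonormalBasis ι ℝ E) (b' : OrthonormalBasis ι' ℝ E)

theorem OrthonormalBasis.sum_apply_self_eq (B : E →ₗ[ℝ] E →ₗ[ℝ] M) :
    ∑ i, B (b i) (b i) = ∑ j, B (b' j) (b' j) := by
  classical
  have hexpand : ∀ j, B (b' j) (b' j) =
      ∑ i, ∑ k, (⟪b i, b' j⟫ * ⟪b' j, b k⟫) • B (b i) (b k) := by
    intro j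
    conv_lhs => rw [← b.sum_repr' (b' j)]
    simp only [map_sum, map_smul, LinearMap.sum_apply, LinearMap.smul_apply, smul_sum, smul_smul]
    rw [sum_comm]
    refine sum_congr rfl fun i _ => sum_congr rfl fun k _ => ?_
    rw [mul_comm, real_inner_comm (b' j) (b k)]
  calc ∑ i, B (b i) (b i)
      = ∑ i, ∑ k, ⟪b i, b k⟫ • B (b i) (b k) := by
        refine sum_congr rfl fun i _ => ?_
        simp [orthonormal_iff_ite.mp b.orthonormal, ite_smul]
    _ = ∑ i, ∑ k, (∑ j, ⟪b i, b' j⟫ * ⟪b' j, b k⟫) • B (b i) (b k) := by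
        simp only [b'.sum_inner_mul_inner]
    _ = ∑ j, B (b' j) (b' j) := by
        simp only [hexpand, sum_smul]
        exact (sum_congr rfl fun i _ => sum_comm).trans sum_comm

theorem OrthonormalBasis.sum_norm_sq_apply_eq (T : E →ₗ[ℝ] F) :
    ∑ i, ‖T (b i)‖ ^ 2 = ∑ j, ‖T (b' j)‖ ^ 2 := by
  simpa [real_inner_self_eq_norm_sq] using b.sum_apply_self_eq b' ((innerₗ F).compl₁₂ T T)

theorem OrthonormalBasis.sum_sum_norm_sq_apply_eq (B : E →ₗ[ℝ] E →ₗ[ℝ] F) :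
    ∑ i, ∑ k, ‖B (b i) (b k)‖ ^ 2 = ∑ j, ∑ l, ‖B (b' j) (b' l)‖ ^ 2 := by
  calc ∑ i, ∑ k, ‖B (b i) (b k)‖ ^ 2
      = ∑ l, ∑ i, ‖B.flip (b' l) (b i)‖ ^ 2 := by
        simp only [fun i => b.sum_norm_sq_apply_eq b' (B (b i))]
        exact sum_comm
    _ = ∑ j, ∑ l, ‖B (b' j) (b' l)‖ ^ 2 := by
        simp only [fun l => b.sum_norm_sq_apply_eq b' (B.flip (b' l))]
        exact sum_comm

end OrthonormalBasis

theorem Orthonormal.sum_elim {ι ι' E : Type*} [NormedAddCommGroup E] [InnerProductSpace ℝ E]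
    {v : ι → E} {w : ι' → E} (hv : Orthonormal ℝ v) (hw : Orthonormal ℝ w)
    (hvw : ∀ i j, ⟪v i, w j⟫ = 0) : Orthonormal ℝ (Sum.elim v w) := by
  refine ⟨fun i => ?_, fun i j hij => ?_⟩
  · cases i <;> simp [hv.1, hw.1]
  · rcases i with i | i <;> rcases j with j | j
    · exact hv.2 fun h => hij (congrArg _ h)
    · exact hvw i j
    · simpa [real_inner_comm] using hvw j i
    · exact hw.2 fun h => hij (congrArg _ h)

theorem Submodule.exists_le_finrank_eq {K V : Type*} [DivisionRing K] [AddCommGroup V]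
    [Module K V] (W : Submodule K V) [FiniteDimensional K W] {k : ℕ} (hk : k ≤ finrank K W) :
    ∃ L ≤ W, finrank K L = k := by
  let b := finBasis K W
  have hli : LinearIndependent K (W.subtype ∘ b ∘ Fin.castLE hk) :=
    (b.linearIndependent.comp _ (Fin.castLE_injective hk)).map' W.subtype W.ker_subtype
  refine ⟨span K (Set.range (W.subtype ∘ b ∘ Fin.castLE hk)), span_le.2 ?_, ?_⟩
  · rintro _ ⟨i, rfl⟩
    exact (b _).2
  · rw [finrank_span_eq_card hli, Fintype.card_fin]

section Submodule

variable {V : Type*} [NormedAddCommGroup V] [InnerProductSpace ℝ V]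

theorem Orthonormal.exists_orthonormalBasis_of_card_eq_finrank {ι : Type*} [Fintype ι]
    {W : Submodule ℝ V} [FiniteDimensional ℝ W] {e : ι → V} (he : Orthonormal ℝ e)
    (heW : ∀ i, e i ∈ W) (hcard : Fintype.card ι = finrank ℝ W) :
    ∃ b : OrthonormalBasis ι ℝ W, ∀ i, (b i : V) = e i := by
  have he' := he.codRestrict W heW
  exact ⟨OrthonormalBasis.mk he' (he'.linearIndependent.span_eq_top_of_card_eq_finrank' hcard).ge,
    fun i => by simp⟩

theorem OrthonormalBasis.sum_sq_inner_coe {ι : Type*} [Fintype ι] {W : Submodule ℝ V}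
    [W.HasOrthogonalProjection] (b : OrthonormalBasis ι ℝ W) (v : V) :
    ∑ i, ⟪(b i : V), v⟫ ^ 2 = ‖(W.orthogonalProjectionOnto v : V)‖ ^ 2 := by
  simp_rw [← Submodule.inner_orthogonalProjectionOnto_eq_of_mem_left]
  rw [b.sum_sq_inner_right, Submodule.coe_norm]

variable [FiniteDimensional ℝ V]

theorem Submodule.exists_orthonormalBasis_extend_of_finrank_add_one {W L : Submodule ℝ V}
    (hLW : L ≤ W) (hL : finrank ℝ L + 1 = finrank ℝ W) :
    ∃ f : OrthonormalBasis (Fin (finrank ℝ L) ⊕ Unit) ℝ W,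
      ∀ p, (f (.inl p) : V) = stdOrthonormalBasis ℝ L p := by
  have hcompl : finrank ℝ L + finrank ℝ ↥(Lᗮ ⊓ W) = finrank ℝ W :=
    Submodule.finrank_add_inf_finrank_orthogonal hLW
  obtain ⟨u, hu, hu0⟩ : ∃ u ∈ Lᗮ ⊓ W, u ≠ 0 :=
    Submodule.exists_mem_ne_zero_of_ne_bot fun h => by
      rw [h, finrank_bot] at hcompl
      omega
  set v := Sum.elim (fun p => (stdOrthonormalBasis ℝ L p : V)) fun _ : Unit => ‖u‖⁻¹ • u
  have hv : Orthonormal ℝ v :=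
    ((stdOrthonormalBasis ℝ L).orthonormal.comp_linearIsometry L.subtypeₗᵢ).sum_elim
      ⟨fun _ => norm_smul_inv_norm hu0, Subsingleton.pairwise⟩ fun p _ => by
        simp [real_inner_smul_right,
          Submodule.inner_right_of_mem_orthogonal (stdOrthonormalBasis ℝ L p).2 hu.1]
  have hvW : ∀ i, v i ∈ W := by
    rintro (p | _)
    · exact hLW (stdOrthonormalBasis ℝ L p).2
    · exact W.smul_mem _ hu.2
  obtain ⟨f, hf⟩ := hv.exists_orthonormalBasis_of_card_eq_finrank hvW (by simp [hL])
  exact ⟨f, fun p => hf (.inl p)⟩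

end Submodule

section Casorati

variable {V : Type*} [NormedAddCommGroup V] [InnerProductSpace ℝ V] [FiniteDimensional ℝ V]

theorem norm_sq_sum_le_casorati {ι : Type*} [Fintype ι] {W L : Submodule ℝ V} {n : ℕ}
    (hW : finrank ℝ W = n) (hLW : L ≤ W) (hL : finrank ℝ L + 1 = n)
    (b : OrthonormalBasis ι ℝ W) (B : V →ₗ[ℝ] V →ₗ[ℝ] V)
    {r : ℝ} (hr0 : 0 < r) (hr1 : r < (n : ℝ) * ((n : ℝ) - 1)) :
    ‖∑ i, B (b i) (b i)‖ ^ 2 ≤ (1 + r / n) * ∑ i, ∑ j, ‖B (b i) (b j)‖ ^ 2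
      + ((n - 1) * (n + r) * (n ^ 2 - n - r) / (r * n)) * hypCas n B L := by
  obtain ⟨f, hf⟩ := Submodule.exists_orthonormalBasis_extend_of_finrank_add_one hLW (hL.trans hW.symm)
  set BW := B.compl₁₂ W.subtype W.subtype
  set e := stdOrthonormalBasis ℝ L
  set u : V := ((f (.inr ()) : W) : V)
  set x := ∑ p, B (e p) (e p)
  set S := ∑ p, ‖B (e p) (e p)‖ ^ 2
  have hn1 : (0 : ℝ) < n - 1 := by nlinarith
  have hn0 : (0 : ℝ) < n := by linarith
  have hL' : (finrank ℝ L : ℝ) = n - 1 := by rw [← hL]; push_cast; ring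
  have htrace : ∑ i, B (b i) (b i) = x + B u u := by
    simpa [BW, Fintype.sum_sum_type, hf] using b.sum_apply_self_eq f BW
  have hHS : S + ‖B u u‖ ^ 2 ≤ ∑ i, ∑ j, ‖B (b i) (b j)‖ ^ 2 := by
    calc S + ‖B u u‖ ^ 2 = ∑ j, ‖BW (f j) (f j)‖ ^ 2 := by simp [BW, Fintype.sum_sum_type, hf, S, u]
      _ ≤ ∑ j, ∑ k, ‖BW (f j) (f k)‖ ^ 2 :=
          sum_diag_le_sum_sum (fun j k => ‖BW (f j) (f k)‖ ^ 2) fun _ _ => by positivity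
      _ = ∑ i, ∑ j, ‖B (b i) (b j)‖ ^ 2 := (b.sum_sum_norm_sq_apply_eq f BW).symm
  have hS : S ≤ (n - 1) * hypCas n B L := by
    rw [hypCas, ← mul_assoc, mul_one_div_cancel hn1.ne', one_mul]
    exact sum_diag_le_sum_sum (fun p q => ‖B (e p) (e q)‖ ^ 2) fun _ _ => by positivity
  have hx : ‖x‖ ^ 2 ≤ (n - 1) * S := by
    simpa [hL'] using norm_sum_sq_le_card_mul_sum_norm_sq univ fun p => B (e p) (e p)
  have hK : 0 ≤ (n + r) * (n ^ 2 - n - r) / (r * n) := by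
    have : (0 : ℝ) < n ^ 2 - n - r := by nlinarith
    positivity
  rw [htrace]
  calc ‖x + B u u‖ ^ 2 ≤ (1 + n / r) * ‖x‖ ^ 2 + (1 + (n / r)⁻¹) * ‖B u u‖ ^ 2 :=
        norm_add_sq_le_of_pos _ _ (by positivity)
    _ ≤ (1 + n / r) * ((n - 1) * S) + (1 + r / n) * ‖B u u‖ ^ 2 := by
        rw [inv_div]; gcongr
    _ = (1 + r / n) * (S + ‖B u u‖ ^ 2) + (n + r) * (n ^ 2 - n - r) / (r * n) * S := by
        field_simp; ring
    _ ≤ (1 + r / n) * ∑ i, ∑ j, ‖B (b i) (b j)‖ ^ 2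
          + (n + r) * (n ^ 2 - n - r) / (r * n) * ((n - 1) * hypCas n B L) := by
        gcongr
    _ = _ := by ring

theorem norm_sq_sum_sub_le_sInf_hypCas {ι : Type*} [Fintype ι] {W : Submodule ℝ V} {n : ℕ}
    (hW : finrank ℝ W = n) (hn : 1 ≤ n) (b : OrthonormalBasis ι ℝ W) (B : V →ₗ[ℝ] V →ₗ[ℝ] V)
    {r : ℝ} (hr0 : 0 < r) (hr1 : r < (n : ℝ) * ((n : ℝ) - 1)) :
    ‖∑ i, B (b i) (b i)‖ ^ 2 - ∑ i, ∑ j, ‖B (b i) (b j)‖ ^ 2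
      ≤ r * ((n : ℝ)⁻¹ * ∑ i, ∑ j, ‖B (b i) (b j)‖ ^ 2)
        + ((n - 1) * (n + r) * (n ^ 2 - n - r) / (r * n))
          * sInf {x : ℝ | ∃ L : Submodule ℝ V, L ≤ W ∧ finrank ℝ L = n - 1 ∧ x = hypCas n B L} := by
  set C := ∑ i, ∑ j, ‖B (b i) (b j)‖ ^ 2
  set K : ℝ := (n - 1) * (n + r) * (n ^ 2 - n - r) / (r * n)
  have hK : 0 < K := by
    have h1 : (0 : ℝ) < n - 1 := by nlinarith
    have h2 : (0 : ℝ) < n ^ 2 - n - r := by nlinarith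
    positivity
  have hne : {x : ℝ | ∃ L : Submodule ℝ V, L ≤ W ∧ finrank ℝ L = n - 1 ∧ x = hypCas n B L}.Nonempty := by
    obtain ⟨L, hLW, hL⟩ := W.exists_le_finrank_eq (k := n - 1) (by omega)
    exact ⟨_, L, hLW, hL, rfl⟩
  have hlower := le_csInf hne (a := (‖∑ i, B (b i) (b i)‖ ^ 2 - (1 + r / n) * C) / K) <| by
    rintro _ ⟨L, hLW, hL, rfl⟩
    rw [div_le_iff₀' hK]
    linarith [norm_sq_sum_le_casorati hW hLW (by omega) b B hr0 hr1]
  rw [div_le_iff₀' hK] at hlower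
  have hn0 : (n : ℝ) ≠ 0 := by positivity
  linarith [show (1 + r / n) * C = C + r * ((n : ℝ)⁻¹ * C) by field_simp]

end Casorati

section QuaternionicSpaceForm

variable {V : Type*} [NormedAddCommGroup V] [InnerProductSpace ℝ V]

theorem inner_map_left_eq_neg_of_sq_eq_neg {J : V →ₗ[ℝ] V}
    (hiso : ∀ x y, ⟪J x, J y⟫ = ⟪x, y⟫) (hsq : ∀ x, J (J x) = -x) (x y : V) :
    ⟪J x, y⟫ = -⟪x, J y⟫ := by
  have h := hiso x (J y)
  rw [hsq, inner_neg_right] at h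
  linarith

theorem inner_qsfCurv {J : Fin 3 → V →ₗ[ℝ] V} (hskew : ∀ α x y, ⟪J α x, y⟫ = -⟪x, J α y⟫)
    (c : ℝ) (x y : V) :
    ⟪qsfCurv c J x y y, x⟫ =
      c / 4 * (‖x‖ ^ 2 * ‖y‖ ^ 2 - ⟪x, y⟫ ^ 2 + 3 * ∑ α, ⟪x, J α y⟫ ^ 2) := by
  have hself : ∀ α (z : V), ⟪z, J α z⟫ = 0 := fun α z => by
    linarith [hskew α z z, real_inner_comm z (J α z)]
  have hyx : ∀ α, ⟪y, J α x⟫ = -⟪x, J α y⟫ := fun α => by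
    rw [real_inner_comm, hskew]
  simp only [qsfCurv, real_inner_smul_left, inner_add_left, inner_sub_left, sum_inner,
    hself, hyx, real_inner_comm (J _ y) x, real_inner_self_eq_norm_sq, real_inner_comm y x]
  simp only [mul_sum]
  ring_nf

theorem inner_qsfCurv_self {J : Fin 3 → V →ₗ[ℝ] V} (hskew : ∀ α x y, ⟪J α x, y⟫ = -⟪x, J α y⟫)
    (c : ℝ) (x : V) : ⟪qsfCurv c J x x x, x⟫ = 0 := by
  have hself : ∀ α, ⟪x, J α x⟫ = 0 := fun α => by
    linarith [hskew α x x, real_inner_comm x (J α x)]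
  have hsum : ∑ α, ⟪x, J α x⟫ ^ 2 = 0 := by simp [hself]
  rw [inner_qsfCurv hskew, real_inner_self_eq_norm_sq, hsum]
  ring

theorem inner_qsfCurv_comm {J : Fin 3 → V →ₗ[ℝ] V} (hskew : ∀ α x y, ⟪J α x, y⟫ = -⟪x, J α y⟫)
    (c : ℝ) (x y : V) : ⟪qsfCurv c J x y y, x⟫ = ⟪qsfCurv c J y x x, y⟫ := by
  have hswap : ∀ α, ⟪y, J α x⟫ ^ 2 = ⟪x, J α y⟫ ^ 2 := fun α => by
    rw [real_inner_comm, hskew, neg_sq]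
  simp only [inner_qsfCurv hskew, hswap, real_inner_comm y x]
  ring

theorem sum_sum_inner_qsfCurv {ι : Type*} [Fintype ι] {W : Submodule ℝ V}
    [W.HasOrthogonalProjection] {J : Fin 3 → V →ₗ[ℝ] V}
    (hskew : ∀ α x y, ⟪J α x, y⟫ = -⟪x, J α y⟫) {θ : ℝ}
    (hslant : ∀ α, ∀ x ∈ W, ‖(W.orthogonalProjectionOnto (J α x) : V)‖ = Real.cos θ * ‖x‖)
    (c : ℝ) (b : OrthonormalBasis ι ℝ W) :
    ∑ i, ∑ j, ⟪qsfCurv c J (b i) (b j) (b j), b i⟫ =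
      c / 4 * (Fintype.card ι * (Fintype.card ι - 1) + 9 * Fintype.card ι * Real.cos θ ^ 2) := by
  have hnorm : ∀ i, ‖(b i : V)‖ = 1 := fun i => by
    rw [← Submodule.coe_norm]; exact b.orthonormal.1 i
  have hrow : ∀ i, ∑ j, ⟪(b i : V), b j⟫ ^ 2 = 1 := fun i => by
    simpa [hnorm] using b.sum_sq_inner_left (b i)
  have hcol : ∀ α j, ∑ i, ⟪(b i : V), J α (b j)⟫ ^ 2 = Real.cos θ ^ 2 := fun α j => by
    rw [b.sum_sq_inner_coe, hslant α _ (b j).2, hnorm, mul_one]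
  have htriple : ∑ i, ∑ j, ∑ α, ⟪(b i : V), J α (b j)⟫ ^ 2 = ∑ j, ∑ α : Fin 3, Real.cos θ ^ 2 :=
    sum_comm.trans (sum_congr rfl fun j _ => sum_comm.trans (sum_congr rfl fun α _ => hcol α j))
  simp only [inner_qsfCurv hskew, hnorm, ← mul_sum, sum_add_distrib, sum_sub_distrib, hrow,
    htriple, sum_const, card_univ, Fintype.card_fin, nsmul_eq_mul]
  ring

end QuaternionicSpaceForm

-- `W` models `T_pM`, `B` the second fundamental form, and by the Gauss equation the summand is
-- the sectional curvature `K(e_i ∧ e_j)`, so the left-hand side is `ρ`.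
theorem stmt7_general {V : Type*} [NormedAddCommGroup V] [InnerProductSpace ℝ V]
    [FiniteDimensional ℝ V] (c : ℝ)
    (J : Fin 3 → V →ₗ[ℝ] V)
    (hJiso : ∀ α (x y : V), ⟪J α x, J α y⟫ = ⟪x, y⟫)
    (hJsq : ∀ α (x : V), J α (J α x) = -x)
    (W : Submodule ℝ V) (θ : ℝ)
    (hslant : ∀ (α : Fin 3), ∀ x ∈ W,
      ‖((W.orthogonalProjection (J α x)) : V)‖ = Real.cos θ * ‖x‖)
    (n : ℕ) (hn : 2 ≤ n) (hrank : Module.finrank ℝ W = n)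
    (e : Fin n → V) (he : Orthonormal ℝ e) (heW : ∀ i, e i ∈ W)
    (B : V →ₗ[ℝ] V →ₗ[ℝ] V)
    (hBsymm : ∀ x y : V, B x y = B y x)
    (r : ℝ) (hr0 : 0 < r) (hr1 : r < (n : ℝ) * ((n : ℝ) - 1)) :
    2 * (∑ i : Fin n, ∑ j : Fin n,
          if i < j then
            ⟪qsfCurv c J (e i) (e j) (e j), e i⟫ + ⟪B (e i) (e i), B (e j) (e j)⟫
              - ‖B (e i) (e j)‖ ^ 2
          else 0) / ((n : ℝ) * ((n : ℝ) - 1))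
      ≤ (r * ((n : ℝ)⁻¹ * ∑ i : Fin n, ∑ j : Fin n, ‖B (e i) (e j)‖ ^ 2)
          + (((n : ℝ) - 1) * ((n : ℝ) + r) * ((n : ℝ) ^ 2 - (n : ℝ) - r) / (r * (n : ℝ)))
            * sInf {x : ℝ | ∃ L : Submodule ℝ V,
                L ≤ W ∧ Module.finrank ℝ L = n - 1 ∧ x = hypCas n B L})
          / ((n : ℝ) * ((n : ℝ) - 1))
        + (c / 4) * (1 + (9 / ((n : ℝ) - 1)) * Real.cos θ ^ 2) := by
  have hskew : ∀ α x y, ⟪J α x, y⟫ = -⟪x, J α y⟫ := fun α =>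
    inner_map_left_eq_neg_of_sq_eq_neg (hJiso α) (hJsq α)
  obtain ⟨b, hb⟩ := he.exists_orthonormalBasis_of_card_eq_finrank heW (by simp [hrank])
  obtain rfl : e = fun i => (b i : V) := funext fun i => (hb i).symm
  set t : Fin n → Fin n → ℝ := fun i j => ⟪qsfCurv c J (b i) (b j) (b j), b i⟫
    + ⟪B (b i) (b i), B (b j) (b j)⟫ - ‖B (b i) (b j)‖ ^ 2 with ht
  have htsymm : ∀ i j, t i j = t j i := fun i j => by
    simp only [ht, inner_qsfCurv_comm hskew c (b i : V), real_inner_comm (B (b i) (b i)),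
      hBsymm (b i : V)]
  have htdiag : ∀ i, t i i = 0 := fun i => by
    simp [ht, inner_qsfCurv_self hskew]
  have htsum : ∑ i, ∑ j, t i j = c / 4 * (n * (n - 1) + 9 * n * Real.cos θ ^ 2)
      + (‖∑ i, B (b i) (b i)‖ ^ 2 - ∑ i, ∑ j, ‖B (b i) (b j)‖ ^ 2) := by
    simp only [ht, sum_add_distrib, sum_sub_distrib, sum_sum_inner_qsfCurv hskew hslant c b,
      norm_sum_sq_eq_sum_sum_inner, Fintype.card_fin]
    ring
  have hoff : 2 * ∑ i, ∑ j, (if i < j then t i j else 0) = ∑ i, ∑ j, t i j := by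
    simp [sum_sum_eq_two_mul_sum_lt_add_sum_diag t htsymm, htdiag]
  have hD : (0 : ℝ) < n * (n - 1) := by nlinarith
  rw [hoff, htsum, add_div, add_comm]
  gcongr ?_ + ?_
  · exact (div_le_div_iff_of_pos_right hD).2 (norm_sq_sum_sub_le_sInf_hypCas hrank (by omega) b B hr0 hr1)
  · have hn1 : (n : ℝ) - 1 ≠ 0 := by nlinarith
    apply le_of_eq
    field_simp

/-- for a θ-slant proper submanifold `Mⁿ` of a quaternionic space
form `M̄^{4m}(c)` and any `0 < r < n(n−1)`, the normalized scalar curvature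
satisfies `ρ ≤ δ_C(r;n−1)/(n(n−1)) + (c/4)(1 + (9/(n−1))cos²θ)`, where
`δ_C(r;n−1) = r𝒞 + ((n−1)(n+r)(n²−n−r)/(rn))·inf{𝒞(L) : L hyperplane of T_pM}`.
Pointwise model: `W` is the tangent space, `e` an orthonormal basis of `W`, `B`
the (symmetric, normal-valued) second fundamental form, and `τ` is given by the
Gauss equation with the quaternionic space form curvature `qsfCurv`. -/
theorem stmt7 {V : Type*} [NormedAddCommGroup V] [InnerProductSpace ℝ V]
    [FiniteDimensional ℝ V] (m : ℕ) (hdim : Module.finrank ℝ V = 4 * m) (c : ℝ)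
    (J : Fin 3 → V →ₗ[ℝ] V)
    (hJiso : ∀ α (x y : V), ⟪J α x, J α y⟫ = ⟪x, y⟫)
    (hJsq : ∀ α (x : V), J α (J α x) = -x)
    (hJmul : ∀ (α : Fin 3) (x : V), J α (J (α + 1) x) = J (α + 2) x)
    (hJanti : ∀ (α : Fin 3) (x : V), J (α + 1) (J α x) = -(J (α + 2) x))
    (W : Submodule ℝ V) (θ : ℝ) (hθ1 : 0 < θ) (hθ2 : θ < Real.pi / 2)
    (hslant : ∀ (α : Fin 3), ∀ x ∈ W,
      ‖((W.orthogonalProjection (J α x)) : V)‖ = Real.cos θ * ‖x‖)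
    (n : ℕ) (hn : 2 ≤ n) (hrank : Module.finrank ℝ W = n)
    (e : Fin n → V) (he : Orthonormal ℝ e) (heW : ∀ i, e i ∈ W)
    (B : V →ₗ[ℝ] V →ₗ[ℝ] V)
    (hBsymm : ∀ x y : V, B x y = B y x)
    (hBnormal : ∀ x ∈ W, ∀ y ∈ W, B x y ∈ Wᗮ)
    (r : ℝ) (hr0 : 0 < r) (hr1 : r < (n : ℝ) * ((n : ℝ) - 1)) :
    2 * (∑ i : Fin n, ∑ j : Fin n,
          if i < j then
            ⟪qsfCurv c J (e i) (e j) (e j), e i⟫ + ⟪B (e i) (e i), B (e j) (e j)⟫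
              - ‖B (e i) (e j)‖ ^ 2
          else 0) / ((n : ℝ) * ((n : ℝ) - 1))
      ≤ (r * ((n : ℝ)⁻¹ * ∑ i : Fin n, ∑ j : Fin n, ‖B (e i) (e j)‖ ^ 2)
          + (((n : ℝ) - 1) * ((n : ℝ) + r) * ((n : ℝ) ^ 2 - (n : ℝ) - r) / (r * (n : ℝ)))
            * sInf {x : ℝ | ∃ L : Submodule ℝ V,
                L ≤ W ∧ Module.finrank ℝ L = n - 1 ∧ x = hypCas n B L})
          / ((n : ℝ) * ((n : ℝ) - 1))
        + (c / 4) * (1 + (9 / ((n : ℝ) - 1)) * Real.cos θ ^ 2) :=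
  stmt7_general c J hJiso hJsq W θ hslant n hn hrank e he heW B hBsymm r hr0 hr1
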